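/- Let f_{r₁}(z) = z^{n+1} − z^{n−1} v_n − z^{n−2} v_{n−1} − ⋯ − z v₂ − v₁ with v_j ∈ ℍ. Then every zero z of f_{r₁} satisfies |z| ≤ (1 + 2 Σ_{j=1}^{n} |v_j|²)^{1/4}. -/

import Mathlib

open scoped Quaternion
open Finset Matrix

/-!
Put `r = ‖z‖` and `S = ∑ ‖v j‖ ^ 2`. Taking norms in `z ^ (n + 1) = ∑ z ^ (j - 1) * v j` and
applying Cauchy–Schwarz against the geometric weights `r ^ (j - 1)`, whose squares sum to
`(r ^ (2 * n) - 1) / (r ^ 2 - 1) < r ^ (2 * n) / (r ^ 2 - 1)` when `r > 1`, gives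
`r ^ 2 * (r ^ 2 - 1) ≤ S` (trivially so when `r ≤ 1`). Finally
`r ^ 4 ≤ 1 + 2 * r ^ 2 * (r ^ 2 - 1)`, as the difference is `(r ^ 2 - 1) ^ 2`.
-/

noncomputable def specNorm {n : ℕ} (A : Matrix (Fin n) (Fin n) ℍ[ℝ]) : ℝ :=
  sSup {r : ℝ | ∃ x : Fin n → ℍ[ℝ], x ≠ 0 ∧
    r = Real.sqrt (∑ i, ‖A.mulVec x i‖ ^ 2) / Real.sqrt (∑ i, ‖x i‖ ^ 2)}

theorem Finset.sum_Icc_one_eq_sum_range {M : Type*} [AddCommMonoid M] (f : ℕ → M) (n : ℕ) :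
    ∑ j ∈ Icc 1 n, f j = ∑ i ∈ range n, f (i + 1) := by
  rw [range_eq_Ico, sum_Ico_add', ← Ico_add_one_right_eq_Icc, zero_add]

theorem norm_pow_le_sum_of_pow_eq_sum {K ι : Type*} [NormedDivisionRing K] {z : K} {m : ℕ}
    {s : Finset ι} {e : ι → ℕ} {c : ι → K} (h : z ^ m = ∑ i ∈ s, z ^ e i * c i) :
    ‖z‖ ^ m ≤ ∑ i ∈ s, ‖z‖ ^ e i * ‖c i‖ :=
  calc ‖z‖ ^ m = ‖∑ i ∈ s, z ^ e i * c i‖ := by rw [← h, norm_pow]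
    _ ≤ ∑ i ∈ s, ‖z ^ e i * c i‖ := norm_sum_le _ _
    _ = ∑ i ∈ s, ‖z‖ ^ e i * ‖c i‖ := by simp only [norm_mul, norm_pow]

theorem sq_mul_sq_sub_one_le_sum_sq {r : ℝ} (hr : 0 ≤ r) {n : ℕ} {a : ℕ → ℝ}
    (h : r ^ (n + 1) ≤ ∑ i ∈ range n, r ^ i * a i) :
    r ^ 2 * (r ^ 2 - 1) ≤ ∑ i ∈ range n, a i ^ 2 := by
  have hS : 0 ≤ ∑ i ∈ range n, a i ^ 2 := sum_nonneg fun i _ => sq_nonneg _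
  rcases le_or_gt (r ^ 2) 1 with hr1 | hr1
  · nlinarith [sq_nonneg r]
  have hcs : (r ^ 2) ^ n * r ^ 2 ≤ (∑ i ∈ range n, (r ^ 2) ^ i) * ∑ i ∈ range n, a i ^ 2 :=
    calc (r ^ 2) ^ n * r ^ 2 = (r ^ (n + 1)) ^ 2 := by ring
      _ ≤ (∑ i ∈ range n, r ^ i * a i) ^ 2 := pow_le_pow_left₀ (by positivity) h 2
      _ ≤ (∑ i ∈ range n, (r ^ i) ^ 2) * ∑ i ∈ range n, a i ^ 2 := sum_mul_sq_le_sq_mul_sq _ _ _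
      _ = (∑ i ∈ range n, (r ^ 2) ^ i) * ∑ i ∈ range n, a i ^ 2 := by simp only [← pow_mul, mul_comm]
  have hgeom := geom_sum_mul (r ^ 2) n
  have hpow : 0 < (r ^ 2) ^ n := by positivity
  refine le_of_mul_le_mul_left ?_ hpow
  nlinarith

theorem pow_four_le_one_add_two_mul {r S : ℝ} (h : r ^ 2 * (r ^ 2 - 1) ≤ S) :
    r ^ 4 ≤ 1 + 2 * S := by
  nlinarith [sq_nonneg (r ^ 2 - 1)]

theorem bound_thm3_general (n : ℕ) (v : ℕ → ℍ[ℝ]) (z : ℍ[ℝ])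
    (hz : z ^ (n + 1) - ∑ j ∈ Finset.Icc 1 n, z ^ (j - 1) * v j = 0) :
    ‖z‖ ≤ (1 + 2 * ∑ j ∈ Finset.Icc 1 n, ‖v j‖ ^ 2) ^ ((1 : ℝ) / 4) := by
  have hroot := norm_pow_le_sum_of_pow_eq_sum (sub_eq_zero.mp hz)
  simp only [sum_Icc_one_eq_sum_range, Nat.add_sub_cancel] at hroot ⊢
  have h4 := pow_four_le_one_add_two_mul (sq_mul_sq_sub_one_le_sum_sq (norm_nonneg z) hroot)
  rw [one_div, Real.le_rpow_inv_iff_of_pos (norm_nonneg z) (by positivity) four_pos]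
  exact_mod_cast h4

theorem bound_thm3 (n : ℕ) (hn : 2 ≤ n) (v : ℕ → ℍ[ℝ]) (z : ℍ[ℝ])
    (hz : z ^ (n + 1) - ∑ j ∈ Finset.Icc 1 n, z ^ (j - 1) * v j = 0) :
    ‖z‖ ≤ (1 + 2 * ∑ j ∈ Finset.Icc 1 n, ‖v j‖ ^ 2) ^ ((1 : ℝ) / 4) :=
  bound_thm3_general n v z hz
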